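/- arXiv:1402.0781 — 4 statements merged into one kernel-verified Lean document; each statement's English description precedes it below -/
import Mathlib

section
/- Let G be a compact connected Lie group with π₁(G,1) torsion-free, let H be a connected and simply connected topological group, and let q : H → G be a continuous surjective group homomorphism that is a covering map. Fix r ∈ ℕ and let Q be the quotient of H^r (= Fin r → H) by the simultaneous conjugation action of H, with the quotient topology. The group (ker q)^r acts on Q by coordinatewise multiplication, k · [h₁,…,h_r] = [k₁h₁,…,k_r h_r] (this is well defined because ker q is central in H). This action is properly discontinuous in the strong sense: every point of Q has an open neighborhood U such that k · U ∩ U = ∅ for every k ∈ (ker q)^r with k ≠ 1. -/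
open scoped Manifold

/-- The orbit equivalence relation of the simultaneous conjugation action of a group `H`
on `Fin r → H`: two tuples are equivalent iff some single element of `H` conjugates one
to the other in every coordinate. -/
def simConjSetoid (r : ℕ) (H : Type*) [Group H] : Setoid (Fin r → H) where
  r f₁ f₂ := ∃ h : H, (fun i => h * f₂ i * h⁻¹) = f₁
  iseqv := by
    constructor
    · intro f
      exact ⟨1, by simp⟩
    · rintro f₁ f₂ ⟨h, rfl⟩
      refine ⟨h⁻¹, ?_⟩
      funext i
      group
    · rintro f₁ f₂ f₃ ⟨h₁, rfl⟩ ⟨h₂, rfl⟩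
      refine ⟨h₁ * h₂, ?_⟩
      funext i
      group

/-- `Monoid.IsTorsionFree` with its old Mathlib meaning (removed from Mathlib). -/
def Monoid.IsTorsionFree (G : Type*) [Monoid G] : Prop :=
  ∀ g : G, g ≠ 1 → ¬IsOfFinOrder g

/-!
The kernel `K` of `q` is a discrete normal subgroup of the connected group `H`, hence central;
it is torsion-free because `π₁(G, 1) ≃* Kᵐᵒᵖ` for the simply connected cover `H`. Centrality
makes conjugation by `h` depend only on `q h`, which gives a continuous map `G × H → H`.
If `k · [g] = [v]` with `g, v` near `f`, then `k = v (u g u⁻¹)⁻¹` for some `u ∈ G`, so by the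
tube lemma over the compact group `G` it suffices that `f (u f u⁻¹)⁻¹ ∈ K^r` forces it to be `1`.
For such `u` and a coordinate `a`, the element `μ = u a u⁻¹ a⁻¹` is central and
`uᵐ a u⁻ᵐ a⁻¹ = μᵐ`; some positive power `uᵐ` lies near `1` in the compact group `G`, so `μᵐ`
lies near `1` in the discrete group `K`, whence `μᵐ = 1` and `μ = 1`.
-/

open Topology Filter Function

theorem conj_pow_eq_pow_mul {H : Type*} [Group H] {ℓ a μ : H} (hμ : μ ∈ Subgroup.center H)
    (h : ℓ * a * ℓ⁻¹ = μ * a) (m : ℕ) : ℓ ^ m * a * (ℓ ^ m)⁻¹ = μ ^ m * a := by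
  induction m with
  | zero => simp
  | succ m ih =>
    have hcomm : ℓ * μ ^ m = μ ^ m * ℓ := Subgroup.mem_center_iff.mp (pow_mem hμ m) ℓ
    calc ℓ ^ (m + 1) * a * (ℓ ^ (m + 1))⁻¹ = ℓ * (ℓ ^ m * a * (ℓ ^ m)⁻¹) * ℓ⁻¹ := by group
      _ = μ ^ m * (ℓ * a * ℓ⁻¹) := by rw [ih, ← mul_assoc, hcomm]; group
      _ = μ ^ (m + 1) * a := by rw [h, pow_succ, mul_assoc]

section TopologicalGroup

variable {G : Type*} [Group G] [TopologicalSpace G] [IsTopologicalGroup G]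

theorem exists_pow_mem_of_mem_nhds_one [CompactSpace G] (u : G) {W : Set G} (hW : W ∈ 𝓝 1) :
    ∃ m, 0 < m ∧ u ^ m ∈ W := by
  obtain ⟨p, hp⟩ := exists_clusterPt_of_compactSpace (map (u ^ ·) atTop)
  have hdiv : ∀ᶠ x in 𝓝 p ×ˢ 𝓝 p, x.1⁻¹ * x.2 ∈ W := by
    rw [← nhds_prod_eq]
    refine ContinuousAt.preimage_mem_nhds (by fun_prop) ?_
    simpa using hW
  obtain ⟨V, hV, hVW⟩ := eventually_prod_self_iff (r := fun x y => x⁻¹ * y ∈ W) |>.mp hdiv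
  have hfreq : ∃ᶠ n in atTop, u ^ n ∈ V := mapClusterPt_iff_frequently.mp hp V hV
  obtain ⟨m₁, -, hm₁⟩ := frequently_atTop.mp hfreq 0
  obtain ⟨m₂, hm₂, hm₂V⟩ := frequently_atTop.mp hfreq (m₁ + 1)
  refine ⟨m₂ - m₁, by omega, ?_⟩
  have : u ^ (m₂ - m₁) = (u ^ m₁)⁻¹ * u ^ m₂ := by
    rw [eq_inv_mul_iff_mul_eq, ← pow_add, Nat.add_sub_cancel' (by omega)]
  exact this ▸ hVW _ hm₁ _ hm₂V

theorem Subgroup.le_center_of_isDiscrete [ConnectedSpace G] (N : Subgroup G) [N.Normal]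
    (hN : IsDiscrete (N : Set G)) : N ≤ Subgroup.center G := by
  refine fun z hz => Subgroup.mem_center_iff.mpr fun g => mul_inv_eq_iff_eq_mul.mp ?_
  simpa using isPreconnected_univ.constant_of_mapsTo hN (f := fun g => g * z * g⁻¹)
    (by fun_prop) (fun g _ => ‹N.Normal›.conj_mem z hz g) (Set.mem_univ g) (Set.mem_univ 1)

end TopologicalGroup

theorem simConjSetoid_eq_orbitRel (r : ℕ) (H : Type*) [Group H] :
    simConjSetoid r H = MulAction.orbitRel (ConjAct H) (Fin r → H) := by
  ext f₁ f₂
  exact ⟨fun ⟨h, hh⟩ => ⟨ConjAct.toConjAct h, hh⟩, fun ⟨h, hh⟩ => ⟨ConjAct.ofConjAct h, hh⟩⟩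

theorem isOpenMap_simConjSetoid_mk (r : ℕ) (H : Type*) [Group H] [TopologicalSpace H]
    [IsTopologicalGroup H] : IsOpenMap (Quotient.mk (simConjSetoid r H)) := by
  rw [simConjSetoid_eq_orbitRel]
  exact MulAction.isOpenQuotientMap_quotientMk.isOpenMap

theorem IsQuotientCoveringMap.isTorsionFree {E X K : Type*} [TopologicalSpace E]
    [TopologicalSpace X] [SimplyConnectedSpace E] [Group K] [MulAction K E] {p : E → X}
    (hp : IsQuotientCoveringMap p K) (x : X) (h : Monoid.IsTorsionFree (FundamentalGroup X x)) :
    Monoid.IsTorsionFree K := by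
  intro g hg hfin
  obtain ⟨e, he⟩ := hp.surjective x
  let φ := (hp.fundamentalGroupEquiv ⟨e, he⟩).symm
  refine h (φ (MulOpposite.op g))
    (by rwa [ne_eq, MulEquiv.map_eq_one_iff, MulOpposite.op_eq_one_iff]) ?_
  obtain ⟨n, hn, hgn⟩ := isOfFinOrder_iff_pow_eq_one.mp hfin
  exact isOfFinOrder_iff_pow_eq_one.mpr ⟨n, hn, by rw [← map_pow, ← MulOpposite.op_pow, hgn]; simp⟩

namespace IsCoveringMap

variable {G H : Type*} [Group G] [TopologicalSpace G] [Group H] [TopologicalSpace H]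
  {q : H →* G}

theorem isDiscrete_ker (hq : IsCoveringMap q) : IsDiscrete (q.ker : Set H) := by
  rw [q.coe_ker, isDiscrete_iff_discreteTopology]
  exact (hq 1).1

theorem eventually_eq_one_of_mem_ker (hq : IsCoveringMap q) :
    ∀ᶠ z in 𝓝 (1 : H), z ∈ q.ker → z = 1 := by
  obtain ⟨U, hU, hUker⟩ := nhds_inter_eq_singleton_of_mem_discrete hq.isDiscrete_ker q.ker.one_mem
  filter_upwards [hU] with z hzU hz using (hUker.subset ⟨hzU, hz⟩ : z ∈ ({1} : Set H))

theorem isOpen_setOf_mem_ker_imp_eq_one [T1Space G] (hq : IsCoveringMap q) :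
    IsOpen {z : H | z ∈ q.ker → z = 1} := by
  have hker : IsClosed (q.ker : Set H) := q.coe_ker ▸ isClosed_singleton.preimage hq.continuous
  refine isOpen_iff_mem_nhds.mpr fun z hz => ?_
  by_cases hzk : z ∈ q.ker
  · rw [hz hzk]
    exact hq.eventually_eq_one_of_mem_ker
  · exact mem_of_superset (hker.isOpen_compl.mem_nhds hzk) fun y hy hyk => absurd hyk hy

variable [IsTopologicalGroup H]

theorem isQuotientCoveringMap_ker (hq : IsCoveringMap q) (hqs : Surjective q) :
    IsQuotientCoveringMap q q.ker :=
  (hq.isQuotientMap hqs).isQuotientCoveringMap_of_isDiscrete_ker_monoidHom hq.isDiscrete_ker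

theorem ker_le_center [ConnectedSpace H] (hq : IsCoveringMap q) : q.ker ≤ Subgroup.center H :=
  q.ker.le_center_of_isDiscrete hq.isDiscrete_ker

end IsCoveringMap

section ConjByLift

variable {G H : Type*} [Group G] [TopologicalSpace G] [Group H] [TopologicalSpace H]
  [IsTopologicalGroup H] {q : H →* G}

/-- Conjugation by an arbitrary lift of `u`; for a covering map `q` with connected source the
choice of lift does not matter (`conjByLift_map`). -/
noncomputable def conjByLift (hqs : Surjective q) (u : G) (g : H) : H :=
  surjInv hqs u * g * (surjInv hqs u)⁻¹

variable [ConnectedSpace H]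

theorem conjByLift_map (hq : IsCoveringMap q) (hqs : Surjective q) (h g : H) :
    conjByLift hqs (q h) g = h * g * h⁻¹ := by
  set ℓ := surjInv hqs (q h)
  have hz : h⁻¹ * ℓ ∈ Subgroup.center H := hq.ker_le_center <| by
    rw [q.mem_ker, map_mul, map_inv, surjInv_eq hqs, inv_mul_cancel]
  have hcomm : h⁻¹ * ℓ * g = g * (h⁻¹ * ℓ) := (Subgroup.mem_center_iff.mp hz g).symm
  calc ℓ * g * ℓ⁻¹ = h * (h⁻¹ * ℓ * g) * ℓ⁻¹ := by group
    _ = h * g * h⁻¹ := by rw [hcomm]; group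

theorem continuous_conjByLift (hq : IsCoveringMap q) (hqs : Surjective q) :
    Continuous (uncurry (conjByLift hqs)) := by
  have hQ : IsOpenQuotientMap (Prod.map q id : H × H → G × H) :=
    (hq.isQuotientCoveringMap_ker hqs).isOpenQuotientMap.prodMap .id
  rw [← hQ.continuous_comp_iff]
  convert (show Continuous fun x : H × H => x.1 * x.2 * x.1⁻¹ by fun_prop) using 1
  ext x
  exact conjByLift_map hq hqs x.1 x.2

theorem mul_inv_conjByLift_eq_of_mem_ker (hq : IsCoveringMap q) (hqs : Surjective q) {k : H}
    (hk : k ∈ q.ker) (h₁ h₂ g : H) :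
    h₂ * (k * g) * h₂⁻¹ * (conjByLift hqs (q (h₂ * h₁⁻¹)) (h₁ * g * h₁⁻¹))⁻¹ = k := by
  have hcomm : h₂ * k = k * h₂ := Subgroup.mem_center_iff.mp (hq.ker_le_center hk) h₂
  rw [conjByLift_map hq hqs]
  calc _ = h₂ * k * h₂⁻¹ := by group
    _ = k := by rw [hcomm, mul_inv_cancel_right]

end ConjByLift

section CompactBase

variable {G H : Type*} [Group G] [TopologicalSpace G] [IsTopologicalGroup G] [CompactSpace G]
  [Group H] [TopologicalSpace H] [IsTopologicalGroup H] [SimplyConnectedSpace H] {q : H →* G}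

theorem conjByLift_eq_self_of_mem_ker (hq : IsCoveringMap q) (hqs : Surjective q)
    (htf : Monoid.IsTorsionFree (FundamentalGroup G (1 : G))) {u : G} {a : H}
    (ha : conjByLift hqs u a * a⁻¹ ∈ q.ker) : conjByLift hqs u a = a := by
  set μ := conjByLift hqs u a * a⁻¹
  set ℓ := surjInv hqs u
  have hconj : ℓ * a * ℓ⁻¹ = μ * a := (inv_mul_cancel_right _ a).symm
  have hpow (m : ℕ) : conjByLift hqs (u ^ m) a = μ ^ m * a := by
    rw [← surjInv_eq hqs u, ← map_pow, conjByLift_map hq hqs]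
    exact conj_pow_eq_pow_mul (hq.ker_le_center ha) hconj m
  have hW : ∀ᶠ v in 𝓝 (1 : G), conjByLift hqs v a * a⁻¹ ∈ q.ker →
      conjByLift hqs v a * a⁻¹ = 1 := by
    have hcont : Continuous fun v => conjByLift hqs v a * a⁻¹ :=
      ((continuous_conjByLift hq hqs).comp (continuous_id.prodMk continuous_const)).mul_const _
    refine hcont.continuousAt.tendsto.eventually (p := fun z => z ∈ q.ker → z = 1) ?_
    rw [← map_one q, conjByLift_map hq hqs, one_mul, inv_one, mul_one, mul_inv_cancel]
    exact hq.eventually_eq_one_of_mem_ker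
  obtain ⟨m, hm, hmW⟩ := exists_pow_mem_of_mem_nhds_one u hW
  have hμm : μ ^ m = 1 := by
    simpa [hpow] using hmW (by simpa [hpow] using pow_mem ha m)
  by_contra hne
  refine (hq.isQuotientCoveringMap_ker hqs).isTorsionFree 1 htf ⟨μ, ha⟩
    (fun h => hne (mul_inv_eq_one.mp (congrArg Subtype.val h))) ?_
  exact isOfFinOrder_iff_pow_eq_one.mpr ⟨m, hm, Subtype.ext hμm⟩

theorem exists_mem_nhds_forall_mem_ker_imp_eq_one [T1Space G] (hq : IsCoveringMap q)
    (hqs : Surjective q) (htf : Monoid.IsTorsionFree (FundamentalGroup G (1 : G)))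
    {ι : Type*} [Finite ι] (f : ι → H) :
    ∃ N ∈ 𝓝 f, ∀ g ∈ N, ∀ v ∈ N, ∀ u i,
      v i * (conjByLift hqs u (g i))⁻¹ ∈ q.ker → v i * (conjByLift hqs u (g i))⁻¹ = 1 := by
  set T : Set (((ι → H) × (ι → H)) × G) :=
    {y | ∀ i, y.1.2 i * (conjByLift hqs y.2 (y.1.1 i))⁻¹ ∈ {z : H | z ∈ q.ker → z = 1}}
  have hT : IsOpen T := by
    simp only [T, Set.ofPred_forall]
    refine isOpen_iInter_of_finite fun i => hq.isOpen_setOf_mem_ker_imp_eq_one.preimage ?_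
    have := continuous_conjByLift hq hqs
    fun_prop
  have hfT (u : G) : ((f, f), u) ∈ T := fun i hi => by
    rw [conjByLift_eq_self_of_mem_ker hq hqs htf (by simpa using inv_mem hi), mul_inv_cancel]
  have := isCompact_univ.eventually_forall_of_forall_eventually (P := fun x u => (x, u) ∈ T)
    fun u _ => hT.mem_nhds (hfT u)
  rw [nhds_prod_eq] at this
  exact eventually_prod_self_iff.mp (this.mono fun x hx u => hx u trivial)

end CompactBase

theorem statement2_general
    {E : Type*} [NormedAddCommGroup E]
    {G : Type*} [TopologicalSpace G] [ChartedSpace E G] [Group G] [IsTopologicalGroup G]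
    [CompactSpace G]
    (htf : Monoid.IsTorsionFree (FundamentalGroup G (1 : G)))
    {H : Type*} [Group H] [TopologicalSpace H] [IsTopologicalGroup H]
    [SimplyConnectedSpace H]
    (q : H →* G) (hqs : Function.Surjective q)
    (hqcov : IsCoveringMap q) (r : ℕ) :
    ∀ x : Quotient (simConjSetoid r H), ∃ V : Set (Quotient (simConjSetoid r H)),
      IsOpen V ∧ x ∈ V ∧
        ∀ k : Fin r → H, (∀ i, k i ∈ q.ker) → k ≠ (fun _ => 1) →
          ∀ f : Fin r → H, Quotient.mk (simConjSetoid r H) f ∈ V →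
            Quotient.mk (simConjSetoid r H) (fun i => k i * f i) ∉ V := by
  have : T1Space G := ChartedSpace.t1Space E G
  intro x
  obtain ⟨f, rfl⟩ := Quotient.exists_rep x
  obtain ⟨N, hN, hNker⟩ := exists_mem_nhds_forall_mem_ker_imp_eq_one hqcov hqs htf f
  obtain ⟨U, hUN, hU, hfU⟩ := mem_nhds_iff.mp hN
  refine ⟨Quotient.mk _ '' U, isOpenMap_simConjSetoid_mk r H U hU, ⟨f, hfU, rfl⟩, ?_⟩
  rintro k hk hk1 g ⟨_, hg₁U, hg₁⟩ ⟨_, hg₂U, hg₂⟩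
  obtain ⟨h₁, rfl⟩ := Quotient.exact hg₁
  obtain ⟨h₂, rfl⟩ := Quotient.exact hg₂
  refine hk1 (funext fun i => ?_)
  have hki := hNker _ (hUN hg₁U) _ (hUN hg₂U) (q (h₂ * h₁⁻¹)) i
  rw [mul_inv_conjByLift_eq_of_mem_ker hqcov hqs (hk i)] at hki
  exact hki (hk i)

/-- Let `q : H → G` be a covering homomorphism with `H` connected and
simply connected and `G` a compact connected Lie group with torsion-free `π₁`.  The
coordinatewise multiplication action of `(ker q)^r` on the simultaneous-conjugation
quotient `H^r/H` is properly discontinuous: every point has an open neighborhood `V`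
with `k · V ∩ V = ∅` for every nontrivial `k ∈ (ker q)^r`. -/
theorem statement2
    {E : Type*} [NormedAddCommGroup E] [NormedSpace ℝ E] [FiniteDimensional ℝ E]
    {G : Type*} [TopologicalSpace G] [ChartedSpace E G] [Group G] [IsTopologicalGroup G]
    [LieGroup (modelWithCornersSelf ℝ E) (⊤ : ℕ∞) G] [CompactSpace G] [ConnectedSpace G]
    (htf : Monoid.IsTorsionFree (FundamentalGroup G (1 : G)))
    {H : Type*} [Group H] [TopologicalSpace H] [IsTopologicalGroup H]
    [ConnectedSpace H] [SimplyConnectedSpace H]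
    (q : H →* G) (hqc : Continuous q) (hqs : Function.Surjective q)
    (hqcov : IsCoveringMap q) (r : ℕ) :
    ∀ x : Quotient (simConjSetoid r H), ∃ V : Set (Quotient (simConjSetoid r H)),
      IsOpen V ∧ x ∈ V ∧
        ∀ k : Fin r → H, (∀ i, k i ∈ q.ker) → k ≠ (fun _ => 1) →
          ∀ f : Fin r → H, Quotient.mk (simConjSetoid r H) f ∈ V →
            Quotient.mk (simConjSetoid r H) (fun i => k i * f i) ∉ V :=
  statement2_general (E := E) htf q hqs hqcov r
end

section
/- Let G be a path-connected topological group acting continuously on a locally path-connected topological space X, let π : X → X/G be the quotient map onto the orbit space (with the quotient topology), and let S ⊆ X be a union of path components of X (i.e. for every x ∈ S the path component of x in X is contained in S). Then π(S) is a union of path components of X/G: for every x ∈ S, the path component of π(x) in X/G is contained in π(S). -/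
/-!
Since `G` is path-connected, every orbit lies in a single path component, so a union `S` of path
components is saturated for the orbit relation. In a locally path-connected space such an `S` is
clopen, hence so is its image in the quotient `X/G`, whose preimage is `S` itself. A clopen set contains
the connected component, and a fortiori the path component, of each of its points.
-/

open MulAction Topology

theorem smul_mem_pathComponent {G X : Type*} [Monoid G] [TopologicalSpace G] [PathConnectedSpace G]
    [TopologicalSpace X] [MulAction G X] [ContinuousSMul G X] (g : G) (x : X) :
    g • x ∈ pathComponent x := by
  have hjoin : Joined ((1 : G) • x) (g • x) :=
    (PathConnectedSpace.joined 1 g).map (continuous_id.smul continuous_const)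
  rwa [one_smul] at hjoin

theorem isClopen_of_forall_pathComponent_subset {X : Type*} [TopologicalSpace X]
    [LocallyPathConnectedSpace X] {S : Set X} (hS : ∀ x ∈ S, pathComponent x ⊆ S) :
    IsClopen S := by
  have hS_open : IsOpen S := isOpen_iff_mem_nhds.mpr fun x hx ↦
    Filter.mem_of_superset ((IsOpen.pathComponent x).mem_nhds (mem_pathComponent_self x)) (hS x hx)
  refine ⟨isOpen_compl_iff.mp (isOpen_iff_mem_nhds.mpr fun y hy ↦ ?_), hS_open⟩
  refine Filter.mem_of_superset ((IsOpen.pathComponent y).mem_nhds (mem_pathComponent_self y)) ?_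
  exact fun z hz hzS ↦ hy (hS z hzS (mem_pathComponent_of_mem hz))

theorem IsClopen.pathComponent_subset {X : Type*} [TopologicalSpace X] {s : Set X}
    (hs : IsClopen s) {x : X} (hx : x ∈ s) : pathComponent x ⊆ s :=
  (pathComponent_subset_component x).trans (hs.connectedComponent_subset hx)

theorem preimage_image_quotientMk_orbitRel_eq {G X : Type*} [Group G] [MulAction G X] {S : Set X}
    (hS : ∀ g : G, ∀ x ∈ S, g • x ∈ S) :
    Quotient.mk (orbitRel G X) ⁻¹' (Quotient.mk (orbitRel G X) '' S) = S := by
  refine Set.Subset.antisymm ?_ (Set.subset_preimage_image _ S)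
  rintro y ⟨x, hx, hxy⟩
  obtain ⟨g, rfl⟩ : orbitRel G X y x := Quotient.exact hxy.symm
  exact hS g x hx

theorem statement3_general {G X : Type*} [Group G] [TopologicalSpace G]
    [PathConnectedSpace G] [TopologicalSpace X] [LocallyPathConnectedSpace X]
    [MulAction G X] [ContinuousSMul G X]
    (S : Set X) (hS : ∀ x ∈ S, pathComponent x ⊆ S) :
    ∀ x ∈ S, pathComponent (Quotient.mk (MulAction.orbitRel G X) x) ⊆
      Quotient.mk (MulAction.orbitRel G X) '' S := by
  intro x hx
  have hS_saturated := preimage_image_quotientMk_orbitRel_eq (G := G)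
    fun g y hy ↦ hS y hy (smul_mem_pathComponent g y)
  have hπ : IsQuotientMap (Quotient.mk (orbitRel G X)) := isQuotientMap_quotient_mk'
  have hS_clopen : IsClopen (Quotient.mk (orbitRel G X) '' S) :=
    hπ.isClopen_preimage.mp <| by
      rw [hS_saturated]
      exact isClopen_of_forall_pathComponent_subset hS
  exact hS_clopen.pathComponent_subset ⟨x, hx, rfl⟩

/-- If a path-connected topological group `G` acts continuously on a
locally path-connected space `X` and `S ⊆ X` is a union of path components, then the
image of `S` in the orbit space `X/G` is a union of path components. -/
theorem statement3 {G X : Type*} [Group G] [TopologicalSpace G] [IsTopologicalGroup G]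
    [PathConnectedSpace G] [TopologicalSpace X] [LocallyPathConnectedSpace X]
    [MulAction G X] [ContinuousSMul G X]
    (S : Set X) (hS : ∀ x ∈ S, pathComponent x ⊆ S) :
    ∀ x ∈ S, pathComponent (Quotient.mk (MulAction.orbitRel G X) x) ⊆
      Quotient.mk (MulAction.orbitRel G X) '' S :=
  statement3_general S hS
end

section
/- Let p : X → Y be a covering map between arbitrary topological spaces and let x ∈ X be such that the singleton {x} is a closed subset of X. Then the singleton {p(x)} is a closed subset of Y. -/
/-!
A covering map lifts specializations: if `p x ⤳ y`, then `p x` lies in an evenly covered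
neighbourhood `U` of `y`, and the specialization `(p x, i) ⤳ (y, i)` in `U × I` pulls back
along the trivialization to a specialization `x ⤳ x'` with `p x' = y`. So `p` maps the closure
of `{x}` onto the closure of `{p x}`, and a closed point has closed image.
-/

open Topology

theorem IsEvenlyCovered.exists_specializes {E X I : Type*} [TopologicalSpace E]
    [TopologicalSpace X] [TopologicalSpace I] {f : E → X} {x : E} {y : X}
    (h : IsEvenlyCovered f y I) (hxy : f x ⤳ y) : ∃ x', x ⤳ x' ∧ f x' = y := by
  obtain ⟨-, U, hyU, hU, -, H, hH⟩ := h
  let e : f ⁻¹' U := ⟨x, hxy.mem_open hU hyU⟩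
  let y' : U := ⟨y, hyU⟩
  have hU_spec : (H e).1 ⤳ y' :=
    IsInducing.subtypeVal.specializes_iff.1 (by simpa only [hH] using hxy)
  have he_spec : e ⤳ H.symm (y', (H e).2) := by
    simpa only [Prod.mk.eta, Homeomorph.symm_apply_apply] using
      (hU_spec.prod (specializes_refl (H e).2)).map H.symm.continuous
  refine ⟨H.symm (y', (H e).2), he_spec.map continuous_subtype_val, ?_⟩
  rw [← hH, Homeomorph.apply_symm_apply]

theorem IsCoveringMap.specializingMap {E X : Type*} [TopologicalSpace E] [TopologicalSpace X]
    {f : E → X} (hf : IsCoveringMap f) : SpecializingMap f :=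
  fun _ y hxy ↦ (hf y).exists_specializes hxy

theorem SpecializingMap.isClosed_singleton_image {E X : Type*} [TopologicalSpace E]
    [TopologicalSpace X] {f : E → X} (hf : SpecializingMap f) {x : E}
    (hx : IsClosed ({x} : Set E)) : IsClosed ({f x} : Set X) := by
  have := hf.closure_singleton_subset x
  rwa [hx.closure_eq, Set.image_singleton, closure_subset_iff_isClosed] at this

/-- A covering map sends closed points to closed points. -/
theorem statement4 {X Y : Type*} [TopologicalSpace X] [TopologicalSpace Y]
    (p : X → Y) (hp : IsCoveringMap p) (x : X) (hx : IsClosed ({x} : Set X)) :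
    IsClosed ({p x} : Set Y) :=
  hp.specializingMap.isClosed_singleton_image hx
end

section
/- Let A be an abelian group, D a group, G a group, and let q : A × D → G be a surjective group homomorphism whose restriction to the subgroup {1} × D is injective (i.e. for d ∈ D, q(1,d) = 1 implies d = 1). Let Γ = PresentedGroup rels, where rels is a set of relators in a free group F = FreeGroup ι with rels contained in the commutator subgroup [F,F]. Then every group homomorphism ρ : Γ → G lifts through q: there exists a group homomorphism ρ̃ : Γ → A × D with q ∘ ρ̃ = ρ. -/
/-- Let `q : A × D → G` be a surjective homomorphism (`A` abelian) that
is injective on `{1} × D`, and let `Γ = PresentedGroup rels` with all relators in the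
commutator subgroup of the free group.  Then every homomorphism `ρ : Γ → G` lifts
through `q`. -/
theorem statement9 {A D G : Type*} [CommGroup A] [Group D] [Group G]
    (q : A × D →* G) (hsurj : Function.Surjective q)
    (hinj : ∀ d : D, q (1, d) = 1 → d = 1)
    {ι : Type*} (rels : Set (FreeGroup ι))
    (hrels : rels ⊆ ((commutator (FreeGroup ι) : Subgroup (FreeGroup ι)) : Set (FreeGroup ι)))
    (ρ : PresentedGroup rels →* G) :
    ∃ ρ' : PresentedGroup rels →* A × D, q.comp ρ' = ρ := by
  choose f hf using fun i => hsurj (ρ (PresentedGroup.of i))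
  have hcomp : q.comp (FreeGroup.lift f) = ρ.comp (PresentedGroup.mk rels) := by
    ext i
    simp only [MonoidHom.comp_apply, FreeGroup.lift_apply_of, hf]; rfl
  have key : ∀ r ∈ rels, FreeGroup.lift f r = 1 := by
    intro r hr
    have h1 : ((FreeGroup.lift f r : A × D).1) = 1 :=
      Abelianization.commutator_subset_ker
        ((MonoidHom.fst A D).comp (FreeGroup.lift f)) (hrels hr)
    have hmk : PresentedGroup.mk rels r = 1 := by
      have : r ∈ Subgroup.normalClosure rels := Subgroup.subset_normalClosure hr
      exact (QuotientGroup.eq_one_iff r).mpr this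
    have h2 : q (FreeGroup.lift f r) = 1 := by
      have := DFunLike.congr_fun hcomp r
      simp only [MonoidHom.comp_apply] at this
      rw [this, hmk, map_one]
    have h3 : (FreeGroup.lift f r : A × D) = (1, (FreeGroup.lift f r).2) := by
      rw [← h1]
    rw [h3] at h2 ⊢
    rw [hinj _ h2]; rfl
  refine ⟨PresentedGroup.toGroup key, PresentedGroup.ext fun i => ?_⟩
  simp [PresentedGroup.toGroup.of, hf]
end
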